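/- Let d ≥ 1 be an integer, A, B ≥ 0, and let w : ℝ^d → ℝ be a measurable function with ∫_{ℝ^d} |w| dx ≤ A and |w(x)| ≤ B·‖x‖^{−(d+1)} for every x with ‖x‖ ≥ 1. Let P(x,z) = c_d·z/(‖x‖² + z²)^{(d+1)/2} be the Poisson kernel of the upper half-space ℝ^d × (0,∞), where c_d = Γ((d+1)/2)/π^{(d+1)/2} is normalized so that ∫_{ℝ^d} P(x,z) dx = 1 for every z > 0, and define the harmonic extension w̄(x,z) = ∫_{ℝ^d} P(x−y, z)·w(y) dy for z > 0. Then there exists a constant C, depending only on d, such that |w̄(x,z)| ≤ C·(A + B)·(‖x‖² + z²)^{−d/2} for every (x,z) ∈ ℝ^d × (0,∞) with ‖x‖² + z² ≥ 4. -/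

import Mathlib

/-! Write `R² = ‖x‖² + z²` and split the Poisson integral at `‖y‖ = R / 2`. For small `y`,
`‖x - y‖² + z² ≥ R² / 16`, so the kernel is at most `c z R^{-(d+1)} ≤ c R^{-d}` (as `z ≤ R`) and
this part is bounded by `c R^{-d} ∫ |w|`. For large `y`, the decay of `w` gives
`|w y| ≲ B R^{-(d+1)} ≤ B R^{-d}`, and this part is bounded by `B R^{-d}` times the total mass of
the kernel, which is independent of `x` and `z` by scaling. -/

open MeasureTheory Set

/-- The Poisson kernel of the upper half-space `ℝ^d × (0,∞)`, normalized so that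
`∫_{ℝ^d} P(x,z) dx = 1` for every `z > 0`. -/
noncomputable def poissonK (d : ℕ) (x : EuclideanSpace ℝ (Fin d)) (z : ℝ) : ℝ :=
  (Real.Gamma (((d:ℝ) + 1) / 2) / Real.pi ^ (((d:ℝ) + 1) / 2)) * z /
    (‖x‖ ^ 2 + z ^ 2) ^ (((d:ℝ) + 1) / 2)

lemma norm_sq_add_sq_div_sixteen_le {E : Type*} [SeminormedAddCommGroup E] {x y : E} {z : ℝ}
    (hy : 4 * ‖y‖ ^ 2 ≤ ‖x‖ ^ 2 + z ^ 2) : (‖x‖ ^ 2 + z ^ 2) / 16 ≤ ‖x - y‖ ^ 2 + z ^ 2 := by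
  rcases le_or_gt (9 * (‖x‖ ^ 2 + z ^ 2)) (16 * ‖x‖ ^ 2) with hx | hx
  · have hyx : ‖y‖ ≤ ‖x‖ := by nlinarith [norm_nonneg x, norm_nonneg y]
    have htri : ‖x‖ - ‖y‖ ≤ ‖x - y‖ := norm_sub_norm_le x y
    nlinarith [sq_nonneg (2 * ‖x‖ - 3 * ‖y‖), norm_nonneg (x - y)]
  · nlinarith [sq_nonneg ‖x - y‖]

lemma rpow_neg_le_two_rpow_mul {r S p q : ℝ} (hr : 0 ≤ r) (hS : 1 ≤ S) (hrS : S ≤ 4 * r ^ 2)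
    (hq : 0 ≤ q) (hpq : p ≤ q) : r ^ (-q) ≤ 2 ^ q * S ^ (-p / 2) := by
  have hS0 : 0 < S := by linarith
  calc r ^ (-q) = (r ^ 2) ^ (-q / 2) := by
        rw [← Real.rpow_natCast, ← Real.rpow_mul hr]
        ring_nf
    _ ≤ (S / 4) ^ (-q / 2) :=
        Real.rpow_le_rpow_of_nonpos (by positivity) (by linarith) (by linarith)
    _ = 2 ^ q * S ^ (-q / 2) := by
        rw [Real.div_rpow hS0.le (by norm_num), div_eq_mul_inv, ← Real.rpow_neg (by norm_num),
          show (4:ℝ) = 2 ^ (2:ℝ) by norm_num, ← Real.rpow_mul (by norm_num)]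
        ring_nf
    _ ≤ 2 ^ q * S ^ (-p / 2) := by gcongr

section Integrals

variable {α : Type*} [MeasurableSpace α] {μ : Measure α}

lemma integrable_of_lintegral_ofReal_abs_le {w : α → ℝ} {A : ℝ} (hw : AEStronglyMeasurable w μ)
    (h : ∫⁻ y, ENNReal.ofReal |w y| ∂μ ≤ ENNReal.ofReal A) : Integrable w μ :=
  ⟨hw, (hasFiniteIntegral_iff_norm w).2 (h.trans_lt ENNReal.ofReal_lt_top)⟩

lemma integral_abs_le_of_lintegral_ofReal_abs_le {w : α → ℝ} {A : ℝ} (hw : Integrable w μ)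
    (hA : 0 ≤ A) (h : ∫⁻ y, ENNReal.ofReal |w y| ∂μ ≤ ENNReal.ofReal A) :
    ∫ y, |w y| ∂μ ≤ A := by
  rw [← ENNReal.ofReal_le_ofReal_iff hA,
    ofReal_integral_eq_lintegral_ofReal hw.abs (ae_of_all _ fun y => abs_nonneg (w y))]
  exact h

lemma abs_integral_mul_le {k w : α → ℝ} {a b : ℝ} (hk : Integrable k μ) (hw : Integrable w μ)
    (h : ∀ y, |k y * w y| ≤ a * |w y| + b * k y) :
    |∫ y, k y * w y ∂μ| ≤ a * ∫ y, |w y| ∂μ + b * ∫ y, k y ∂μ := by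
  have hbound : Integrable (fun y => a * |w y| + b * k y) μ :=
    (hw.abs.const_mul a).add (hk.const_mul b)
  have hkw : Integrable (fun y => k y * w y) μ :=
    hbound.mono' (hk.aestronglyMeasurable.mul hw.aestronglyMeasurable) (ae_of_all _ h)
  calc |∫ y, k y * w y ∂μ| ≤ ∫ y, |k y * w y| ∂μ := abs_integral_le_integral_abs
    _ ≤ ∫ y, (a * |w y| + b * k y) ∂μ := integral_mono hkw.abs hbound h
    _ = a * ∫ y, |w y| ∂μ + b * ∫ y, k y ∂μ := by
        rw [integral_add (hw.abs.const_mul a) (hk.const_mul b), integral_const_mul,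
          integral_const_mul]

end Integrals

noncomputable def poissonConst (d : ℕ) : ℝ :=
  Real.Gamma (((d:ℝ) + 1) / 2) / Real.pi ^ (((d:ℝ) + 1) / 2)

lemma poissonK_def (d : ℕ) (u : EuclideanSpace ℝ (Fin d)) (z : ℝ) :
    poissonK d u z = poissonConst d * z / (‖u‖ ^ 2 + z ^ 2) ^ (((d:ℝ) + 1) / 2) := rfl

lemma poissonConst_pos (d : ℕ) : 0 < poissonConst d :=
  div_pos (Real.Gamma_pos_of_pos (by positivity)) (Real.rpow_pos_of_pos Real.pi_pos _)

lemma poissonK_nonneg {d : ℕ} (u : EuclideanSpace ℝ (Fin d)) {z : ℝ} (hz : 0 ≤ z) :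
    0 ≤ poissonK d u z := by
  have := (poissonConst_pos d).le
  rw [poissonK_def]
  positivity

lemma poissonK_eq_smul {d : ℕ} (u : EuclideanSpace ℝ (Fin d)) {z : ℝ} (hz : 0 < z) :
    poissonK d u z = (z ^ d)⁻¹ * poissonK d (z⁻¹ • u) 1 := by
  have hnorm : ‖z⁻¹ • u‖ ^ 2 + 1 ^ 2 = (‖u‖ ^ 2 + z ^ 2) / z ^ 2 := by
    rw [norm_smul, norm_inv, Real.norm_eq_abs, abs_of_pos hz]
    field_simp
  have hz2 : ((z ^ 2 : ℝ)) ^ (((d:ℝ) + 1) / 2) = z ^ (d + 1) := by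
    rw [← Real.rpow_natCast z 2, ← Real.rpow_mul hz.le, ← Real.rpow_natCast z (d + 1)]
    push_cast
    ring_nf
  have hpos : 0 < (‖u‖ ^ 2 + z ^ 2) ^ (((d:ℝ) + 1) / 2) := by positivity
  rw [poissonK_def, poissonK_def, hnorm, Real.div_rpow (by positivity) (by positivity), hz2]
  field_simp
  ring

lemma integrable_poissonK_one {d : ℕ} :
    Integrable (fun u : EuclideanSpace ℝ (Fin d) => poissonK d u 1) := by
  have hJ : Integrable (fun u : EuclideanSpace ℝ (Fin d) =>
      ((1:ℝ) + ‖u‖ ^ 2) ^ (-((d:ℝ) + 1) / 2)) := by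
    apply integrable_rpow_neg_one_add_norm_sq
    rw [finrank_euclideanSpace_fin]
    linarith
  refine (hJ.const_mul (poissonConst d)).congr (ae_of_all _ fun u => ?_)
  have hpos : (0:ℝ) ≤ 1 + ‖u‖ ^ 2 := by positivity
  simp only [poissonK_def, neg_div, Real.rpow_neg hpos, one_pow, add_comm (‖u‖ ^ 2)]
  ring

lemma integrable_poissonK {d : ℕ} {z : ℝ} (hz : 0 < z) :
    Integrable (fun u : EuclideanSpace ℝ (Fin d) => poissonK d u z) := by
  simp_rw [poissonK_eq_smul _ hz]
  exact (integrable_poissonK_one.comp_smul (inv_ne_zero hz.ne')).const_mul _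

lemma integral_poissonK {d : ℕ} {z : ℝ} (hz : 0 < z) :
    ∫ u : EuclideanSpace ℝ (Fin d), poissonK d u z = ∫ u, poissonK d u 1 := by
  simp_rw [poissonK_eq_smul _ hz]
  rw [integral_const_mul, Measure.integral_comp_smul volume (fun u => poissonK d u 1),
    finrank_euclideanSpace_fin, smul_eq_mul, abs_of_pos (by positivity), inv_pow, inv_inv,
    ← mul_assoc, inv_mul_cancel₀ (by positivity), one_mul]

lemma poissonK_le_of_le {d : ℕ} {u : EuclideanSpace ℝ (Fin d)} {z S : ℝ} (hz : 0 < z)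
    (hzS : z ^ 2 ≤ S) (h : S / 16 ≤ ‖u‖ ^ 2 + z ^ 2) :
    poissonK d u z ≤ poissonConst d * 16 ^ (((d:ℝ) + 1) / 2) * S ^ (-(d:ℝ) / 2) := by
  set p : ℝ := ((d:ℝ) + 1) / 2
  have hS : 0 < S := by nlinarith
  have hc := (poissonConst_pos d).le
  have hzS' : z ≤ S ^ (1 / 2 : ℝ) := by
    rw [← Real.sqrt_eq_rpow]
    exact Real.le_sqrt_of_sq_le hzS
  calc poissonK d u z ≤ poissonConst d * z / (S / 16) ^ p :=
        div_le_div_of_nonneg_left (by positivity) (by positivity)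
          (Real.rpow_le_rpow (by positivity) h (by positivity))
    _ = poissonConst d * 16 ^ p * (z * S ^ (-p)) := by
        rw [Real.div_rpow hS.le (by norm_num), Real.rpow_neg hS.le]
        field_simp
    _ ≤ poissonConst d * 16 ^ p * (S ^ (1 / 2 : ℝ) * S ^ (-p)) := by gcongr
    _ = poissonConst d * 16 ^ p * S ^ (-(d:ℝ) / 2) := by
        rw [← Real.rpow_add hS]
        congr 2
        ring

lemma abs_poissonK_mul_le {d : ℕ} {w : EuclideanSpace ℝ (Fin d) → ℝ} {B z : ℝ} (hB : 0 ≤ B)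
    (hdecay : ∀ y, 1 ≤ ‖y‖ → |w y| ≤ B * ‖y‖ ^ (-((d:ℝ) + 1)))
    {x : EuclideanSpace ℝ (Fin d)} (hz : 0 < z) (hS : 4 ≤ ‖x‖ ^ 2 + z ^ 2)
    (y : EuclideanSpace ℝ (Fin d)) :
    |poissonK d (x - y) z * w y| ≤
      poissonConst d * 16 ^ (((d:ℝ) + 1) / 2) * (‖x‖ ^ 2 + z ^ 2) ^ (-(d:ℝ) / 2) * |w y| +
        B * 2 ^ ((d:ℝ) + 1) * (‖x‖ ^ 2 + z ^ 2) ^ (-(d:ℝ) / 2) * poissonK d (x - y) z := by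
  set S := ‖x‖ ^ 2 + z ^ 2
  have hP := poissonK_nonneg (x - y) hz.le
  have hc := (poissonConst_pos d).le
  rw [abs_mul, abs_of_nonneg hP]
  rcases le_or_gt (4 * ‖y‖ ^ 2) S with hnear | hfar
  · have hPle := poissonK_le_of_le hz (by nlinarith [sq_nonneg ‖x‖])
      (norm_sq_add_sq_div_sixteen_le hnear)
    calc poissonK d (x - y) z * |w y|
        ≤ poissonConst d * 16 ^ (((d:ℝ) + 1) / 2) * S ^ (-(d:ℝ) / 2) * |w y| := by gcongr
      _ ≤ _ := le_add_of_nonneg_right (by positivity)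
  · have hy : 1 ≤ ‖y‖ := by nlinarith [norm_nonneg y]
    have hwy : |w y| ≤ B * (2 ^ ((d:ℝ) + 1) * S ^ (-(d:ℝ) / 2)) :=
      (hdecay y hy).trans <| mul_le_mul_of_nonneg_left
        (rpow_neg_le_two_rpow_mul (norm_nonneg y) (by linarith) hfar.le (by positivity)
          (by linarith)) hB
    calc poissonK d (x - y) z * |w y|
        ≤ poissonK d (x - y) z * (B * (2 ^ ((d:ℝ) + 1) * S ^ (-(d:ℝ) / 2))) := by gcongr
      _ = B * 2 ^ ((d:ℝ) + 1) * S ^ (-(d:ℝ) / 2) * poissonK d (x - y) z := by ring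
      _ ≤ _ := le_add_of_nonneg_left (by positivity)

theorem stmt18_general (d : ℕ) :
    ∃ C : ℝ, 0 < C ∧ ∀ (A B : ℝ), 0 ≤ A → 0 ≤ B →
      ∀ w : EuclideanSpace ℝ (Fin d) → ℝ, Measurable w →
      (∫⁻ x, ENNReal.ofReal |w x| ≤ ENNReal.ofReal A) →
      (∀ x, 1 ≤ ‖x‖ → |w x| ≤ B * ‖x‖ ^ (-((d:ℝ) + 1))) →
      ∀ (x : EuclideanSpace ℝ (Fin d)) (z : ℝ), 0 < z → 4 ≤ ‖x‖ ^ 2 + z ^ 2 →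
        |∫ y, poissonK d (x - y) z * w y| ≤
          C * (A + B) * (‖x‖ ^ 2 + z ^ 2) ^ (-(d:ℝ)/2) := by
  set K := poissonConst d * 16 ^ (((d:ℝ) + 1) / 2)
  set M := ∫ u : EuclideanSpace ℝ (Fin d), poissonK d u 1
  have hK : 0 < K := by have := poissonConst_pos d; positivity
  have hM : 0 ≤ M := integral_nonneg fun u => poissonK_nonneg u zero_le_one
  refine ⟨K + 2 ^ ((d:ℝ) + 1) * M, by positivity, ?_⟩
  intro A B hA hB w hw hL1 hdecay x z hz hS
  have hwi := integrable_of_lintegral_ofReal_abs_le hw.aestronglyMeasurable hL1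
  have hwA := integral_abs_le_of_lintegral_ofReal_abs_le hwi hA hL1
  have hmass : ∫ y, poissonK d (x - y) z = M := by
    rw [integral_sub_left_eq_self (fun u => poissonK d u z), integral_poissonK hz]
  have key := abs_integral_mul_le ((integrable_poissonK hz).comp_sub_left x) hwi
    (abs_poissonK_mul_le hB hdecay hz hS)
  rw [hmass] at key
  set s := (‖x‖ ^ 2 + z ^ 2) ^ (-(d:ℝ) / 2)
  calc _ ≤ K * s * (∫ y, |w y|) + B * 2 ^ ((d:ℝ) + 1) * s * M := key
    _ ≤ K * s * A + B * 2 ^ ((d:ℝ) + 1) * s * M := by gcongr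
    _ = (K + 2 ^ ((d:ℝ) + 1) * M) * (A + B) * s - (K * B + 2 ^ ((d:ℝ) + 1) * M * A) * s := by
        ring
    _ ≤ _ := sub_le_self _ (by positivity)

/-- Lemma A.1 (analytic core): if `w` has `∫|w| ≤ A` and pointwise decay
`|w(x)| ≤ B‖x‖^{-(d+1)}` for `‖x‖ ≥ 1`, then its Poisson extension
`w̄(x,z) = ∫ P(x−y,z) w(y) dy` satisfies
`|w̄(x,z)| ≤ C (A+B) (‖x‖²+z²)^{-d/2}` whenever `‖x‖²+z² ≥ 4`. -/
theorem stmt18 (d : ℕ) (hd : 1 ≤ d) :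
    ∃ C : ℝ, 0 < C ∧ ∀ (A B : ℝ), 0 ≤ A → 0 ≤ B →
      ∀ w : EuclideanSpace ℝ (Fin d) → ℝ, Measurable w →
      (∫⁻ x, ENNReal.ofReal |w x| ≤ ENNReal.ofReal A) →
      (∀ x, 1 ≤ ‖x‖ → |w x| ≤ B * ‖x‖ ^ (-((d:ℝ) + 1))) →
      ∀ (x : EuclideanSpace ℝ (Fin d)) (z : ℝ), 0 < z → 4 ≤ ‖x‖ ^ 2 + z ^ 2 →
        |∫ y, poissonK d (x - y) z * w y| ≤
          C * (A + B) * (‖x‖ ^ 2 + z ^ 2) ^ (-(d:ℝ)/2) :=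
  stmt18_general d
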